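/- arXiv:2411.03534 — 6 statements merged into one kernel-verified Lean document; each statement's English description precedes it below -/
import Mathlib

section
/- Let A and B be n×n real symmetric matrices with B positive semidefinite, and suppose A - σB is nonsingular for some real σ. Write B = C_b C_bᵀ where C_b is n×r. If λ ∈ ℝ and v ≠ 0 satisfy A v = λ B v, then θ = 1/(λ - σ) is an eigenvalue of the r×r matrix C_bᵀ (A - σB)⁻¹ C_b with eigenvector u = C_bᵀ v, and u ≠ 0. -/
open Matrix

/-- Shift-and-invert spectral transformation: if `A v = λ B v` with `v ≠ 0`, `B = C_b C_bᵀ`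
positive semidefinite, and `A - σ B` invertible, then `u = C_bᵀ v` is a nonzero eigenvector of
`C_bᵀ (A - σ B)⁻¹ C_b` with eigenvalue `1 / (λ - σ)`. -/
theorem stmt0 {n r : ℕ} (A B : Matrix (Fin n) (Fin n) ℝ)
    (hA : A.IsSymm) (hB : B.IsSymm) (hBpsd : B.PosSemidef)
    (Cb : Matrix (Fin n) (Fin r) ℝ) (hCb : B = Cb * Cb.transpose)
    (σ : ℝ) (hinv : IsUnit (A - σ • B).det)
    (lam : ℝ) (v : Fin n → ℝ) (hv : v ≠ 0) (heig : A.mulVec v = lam • B.mulVec v) :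
    Cb.transpose.mulVec v ≠ 0 ∧
      (Cb.transpose * (A - σ • B)⁻¹ * Cb).mulVec (Cb.transpose.mulVec v) =
        (1 / (lam - σ)) • Cb.transpose.mulVec v := by
  set M := A - σ • B with hM
  have hinj : Function.Injective M.mulVec := mulVec_injective_iff_isUnit.2 ((isUnit_iff_isUnit_det M).mpr hinv)
  have hMv : M.mulVec v = (lam - σ) • B.mulVec v := by
    rw [hM, sub_mulVec, smul_mulVec, heig, sub_smul]
  have hlamσ : lam - σ ≠ 0 := by
    intro h
    apply hv
    apply hinj
    rw [hMv, h, zero_smul, mulVec_zero]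
  have hMinv : M⁻¹ * M = 1 := nonsing_inv_mul M hinv
  have hvinv : (lam - σ) • (M⁻¹).mulVec (B.mulVec v) = v := by
    have := congrArg (M⁻¹).mulVec hMv
    rw [mulVec_mulVec, hMinv, one_mulVec, mulVec_smul] at this
    exact this.symm
  have hBv : B.mulVec v = Cb.mulVec (Cb.transpose.mulVec v) := by
    rw [hCb, ← mulVec_mulVec]
  constructor
  · intro h
    apply hv
    apply hinj
    rw [hMv, hBv, h, mulVec_zero, smul_zero, mulVec_zero]
  · rw [← mulVec_mulVec, ← mulVec_mulVec, ← hBv]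
    have : (M⁻¹).mulVec (B.mulVec v) = (1 / (lam - σ)) • v := by
      conv_rhs => rw [← hvinv]
      rw [smul_smul, one_div, inv_mul_cancel₀ hlamσ, one_smul]
    rw [this, mulVec_smul]
end

section
/- Let A - σB be nonsingular, B = C_b C_bᵀ, and suppose u ≠ 0 is an eigenvector of C_bᵀ (A - σB)⁻¹ C_b with eigenvalue θ and C_b u ≠ 0. Then v = (A - σB)⁻¹ C_b u is nonzero and satisfies θ A v = (1 + σθ) B v; moreover C_bᵀ v = θ u. -/
open Matrix

/-- Converse direction of the spectral transformation: if `u` is an eigenvector of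
`C_bᵀ (A - σ B)⁻¹ C_b` with eigenvalue `θ` and `C_b u ≠ 0`, then `v = (A - σ B)⁻¹ C_b u` is
nonzero, satisfies `θ A v = (1 + σ θ) B v`, and `C_bᵀ v = θ u`. -/
theorem stmt1 {n r : ℕ} (A B : Matrix (Fin n) (Fin n) ℝ)
    (hA : A.IsSymm) (hB : B.IsSymm)
    (Cb : Matrix (Fin n) (Fin r) ℝ) (hCb : B = Cb * Cb.transpose)
    (σ : ℝ) (hinv : IsUnit (A - σ • B).det)
    (θ : ℝ) (u : Fin r → ℝ) (hu : u ≠ 0)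
    (heig : (Cb.transpose * (A - σ • B)⁻¹ * Cb).mulVec u = θ • u)
    (hCbu : Cb.mulVec u ≠ 0) :
    (A - σ • B)⁻¹.mulVec (Cb.mulVec u) ≠ 0 ∧
      θ • A.mulVec ((A - σ • B)⁻¹.mulVec (Cb.mulVec u)) =
        (1 + σ * θ) • B.mulVec ((A - σ • B)⁻¹.mulVec (Cb.mulVec u)) ∧
      Cb.transpose.mulVec ((A - σ • B)⁻¹.mulVec (Cb.mulVec u)) = θ • u := by
  set M := A - σ • B with hM
  set v := M⁻¹.mulVec (Cb.mulVec u) with hv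
  have hCv : Cb.transpose.mulVec v = θ • u := by
    show Cbᵀ *ᵥ (M⁻¹ *ᵥ (Cb *ᵥ u)) = θ • u
    rw [Matrix.mulVec_mulVec, Matrix.mulVec_mulVec]
    exact heig
  have hMv : M.mulVec v = Cb.mulVec u := by
    rw [hv, Matrix.mulVec_mulVec, Matrix.mul_nonsing_inv _ hinv, Matrix.one_mulVec]
  have hvne : v ≠ 0 := by
    intro h
    apply hCbu
    rw [← hMv, h, Matrix.mulVec_zero]
  refine ⟨hvne, ?_, hCv⟩
  have hBv : B.mulVec v = θ • Cb.mulVec u := by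
    rw [hCb, ← Matrix.mulVec_mulVec, hCv, Matrix.mulVec_smul]
  have hAv : A.mulVec v = Cb.mulVec u + σ • B.mulVec v := by
    have : A.mulVec v = M.mulVec v + (σ • B).mulVec v := by
      rw [hM, Matrix.sub_mulVec]; abel
    rw [this, hMv, Matrix.smul_mulVec]
  rw [hAv, hBv, smul_add, smul_smul, smul_smul, smul_smul]
  module
end

section
/- Let A, B be nonzero n×n real symmetric matrices with B positive semidefinite of rank r > 0, σ ∈ ℝ with A - σB invertible, and factorizations A - σB = C_a D_a C_aᵀ (D_a diagonal with ±1 entries, C_a invertible) and B = C_b C_bᵀ (C_b with linearly independent columns). Set X = C_a⁻¹ C_b, η² = ‖A - σB‖₂/‖B‖₂, σ₀ = σ‖B‖₂/‖A‖₂, μ = ‖X‖₂²/‖Xᵀ D_a X‖₂ (assuming Xᵀ D_a X ≠ 0). Then η² ‖X‖₂² ≤ (1 + |σ₀|) μ / min_i |σ₀ - ‖B‖₂ λ_i/‖A‖₂|, where the minimum is over all finite generalized eigenvalues λ_i of (A, B). -/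
open Matrix
open scoped Matrix.Norms.L2Operator

private lemma diag_norm_le {r : ℕ} (d : Fin r → ℝ) (M : ℝ) (hM : 0 ≤ M) (h : ∀ i, |d i| ≤ M) :
    ‖(Matrix.diagonal d : Matrix (Fin r) (Fin r) ℝ)‖ ≤ M := by
  rw [Matrix.l2_opNorm_def]
  apply ContinuousLinearMap.opNorm_le_bound _ hM
  intro x
  rw [LinearEquiv.trans_apply, LinearMap.coe_toContinuousLinearMap']
  have h1 : ∀ (y : EuclideanSpace ℝ (Fin r)), ‖y‖ ^ 2 = ∑ i, (y i)^2 := by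
    intro y
    rw [EuclideanSpace.norm_eq, Real.sq_sqrt (by positivity)]
    simp [sq_abs]
  have h2 : (toEuclideanLin (Matrix.diagonal d) x : Fin r → ℝ) = fun i => d i * x i := by
    ext i
    simp [Matrix.toEuclideanLin_apply, Matrix.mulVec_diagonal]
  rw [← pow_le_pow_iff_left₀ (norm_nonneg _) (by positivity) (two_ne_zero), mul_pow,
    h1, h1]
  have h3 : ∀ i, ((toEuclideanLin (Matrix.diagonal d) x : Fin r → ℝ) i)^2 ≤ M^2 * (x i)^2 := by
    intro i
    have hd2 : (d i)^2 ≤ M^2 := by nlinarith [h i, abs_nonneg (d i), sq_abs (d i)]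
    calc ((toEuclideanLin (Matrix.diagonal d) x : Fin r → ℝ) i)^2 = (d i)^2 * (x i)^2 := by
          rw [h2]; ring
      _ ≤ M^2 * (x i)^2 := by nlinarith [sq_nonneg (x i)]
  calc ∑ i, ((toEuclideanLin (Matrix.diagonal d) x : Fin r → ℝ) i)^2
      ≤ ∑ i, M^2 * (x i)^2 := Finset.sum_le_sum fun i _ => h3 i
    _ = M^2 * ∑ i, (x i)^2 := by rw [Finset.mul_sum]

private lemma exists_top_eig {r : ℕ} (hr : 0 < r) (W : Matrix (Fin r) (Fin r) ℝ)
    (hW : W.IsHermitian) :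
    ∃ (θ : ℝ) (v : Fin r → ℝ), v ≠ 0 ∧ W *ᵥ v = θ • v ∧ ‖W‖ ≤ |θ| := by
  have : Nonempty (Fin r) := ⟨⟨0, hr⟩⟩
  obtain ⟨j, -, hj⟩ := Finset.exists_max_image Finset.univ (fun i => |hW.eigenvalues i|)
    ⟨this.some, Finset.mem_univ _⟩
  refine ⟨hW.eigenvalues j, ⇑(hW.eigenvectorBasis j), ?_, hW.mulVec_eigenvectorBasis j, ?_⟩
  · intro h0
    have h1 : ‖hW.eigenvectorBasis j‖ = 1 := hW.eigenvectorBasis.orthonormal.1 j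
    have : (hW.eigenvectorBasis j) = 0 := by
      ext i
      exact congrFun h0 i
    rw [this, norm_zero] at h1
    norm_num at h1
  · have hdle : ∀ i, |(RCLike.ofReal ∘ hW.eigenvalues) i| ≤ |hW.eigenvalues j| := by
      intro i
      simpa using hj i (Finset.mem_univ i)
    calc ‖W‖ = ‖(hW.eigenvectorUnitary : Matrix (Fin r) (Fin r) ℝ) *
          ((Matrix.diagonal (RCLike.ofReal ∘ hW.eigenvalues)) *
            star (hW.eigenvectorUnitary : Matrix (Fin r) (Fin r) ℝ))‖ := by
          rw [← mul_assoc]; conv_lhs => rw [hW.spectral_theorem, Unitary.conjStarAlgAut_apply]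
      _ = ‖(Matrix.diagonal (RCLike.ofReal ∘ hW.eigenvalues)) *
            star (hW.eigenvectorUnitary : Matrix (Fin r) (Fin r) ℝ)‖ :=
          CStarRing.norm_coe_unitary_mul _ _
      _ = ‖(Matrix.diagonal (RCLike.ofReal ∘ hW.eigenvalues) : Matrix (Fin r) (Fin r) ℝ)‖ :=
          CStarRing.norm_mul_mem_unitary _ (Unitary.star_mem hW.eigenvectorUnitary.prop)
      _ ≤ |hW.eigenvalues j| := diag_norm_le _ _ (abs_nonneg _) hdle

/-- Norm bound lemma (first form): with `η² = ‖A-σB‖₂/‖B‖₂`, `σ₀ = σ‖B‖₂/‖A‖₂` and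
`μ = ‖X‖₂²/‖Xᵀ D_a X‖₂`, one has
`η² ‖X‖₂² · min_i |σ₀ - ‖B‖₂ λ_i/‖A‖₂| ≤ (1 + |σ₀|) μ`, the minimum being over all finite
generalized eigenvalues `λ_i` of `(A, B)` (stated in multiplied-through form to avoid
division by the minimum). -/
theorem stmt5 {n r : ℕ} (A B : Matrix (Fin n) (Fin n) ℝ)
    (hA : A.IsSymm) (hB : B.IsSymm) (hA0 : A ≠ 0) (hB0 : B ≠ 0)
    (hBpsd : B.PosSemidef) (hrank : B.rank = r) (hr : 0 < r)
    (σ : ℝ) (hinv : IsUnit (A - σ • B).det)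
    (Ca Da : Matrix (Fin n) (Fin n) ℝ) (hCa : IsUnit Ca.det)
    (hDdiag : ∀ i j, i ≠ j → Da i j = 0) (hDsign : ∀ i, Da i i = 1 ∨ Da i i = -1)
    (hfac : A - σ • B = Ca * Da * Ca.transpose)
    (Cb : Matrix (Fin n) (Fin r) ℝ) (hCb : B = Cb * Cb.transpose)
    (hCbli : LinearIndependent ℝ (fun j => Cb.transpose j))
    (X : Matrix (Fin n) (Fin r) ℝ) (hX : X = Ca⁻¹ * Cb)
    (hW0 : X.transpose * Da * X ≠ 0) :
    (‖A - σ • B‖ / ‖B‖) * ‖X‖ ^ 2 *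
        sInf {d : ℝ | ∃ lam : ℝ, (∃ v : Fin n → ℝ, v ≠ 0 ∧ A.mulVec v = lam • B.mulVec v) ∧
          d = |σ * ‖B‖ / ‖A‖ - ‖B‖ * lam / ‖A‖|} ≤
      (1 + |σ * ‖B‖ / ‖A‖|) * (‖X‖ ^ 2 / ‖X.transpose * Da * X‖) := by
  classical
  -- basic structure of Da
  have hDa_eq : Da = Matrix.diagonal (fun i => Da i i) := by
    ext i j
    by_cases h : i = j
    · subst h; simp
    · simp [Matrix.diagonal_apply_ne _ h, hDdiag i j h]
  have hDD : Da * Da = 1 := by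
    rw [hDa_eq, Matrix.diagonal_mul_diagonal]
    have e : (fun i => Da i i * Da i i) = fun _ : Fin n => (1:ℝ) :=
      funext fun i => by rcases hDsign i with h | h <;> rw [h] <;> norm_num
    rw [e, Matrix.diagonal_one]
  have hDsymm : Da.transpose = Da := by
    conv_lhs => rw [hDa_eq]
    rw [Matrix.diagonal_transpose, ← hDa_eq]
  -- symmetry of W
  set W : Matrix (Fin r) (Fin r) ℝ := X.transpose * Da * X with hWdef
  have hWsymm : W.transpose = W := by
    rw [hWdef, Matrix.transpose_mul, Matrix.transpose_mul, Matrix.transpose_transpose, hDsymm,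
      Matrix.mul_assoc]
  have hWherm : W.IsHermitian := by
    rw [Matrix.IsHermitian, Matrix.conjTranspose_eq_transpose_of_trivial, hWsymm]
  obtain ⟨θ, v, hv0, hvW, hθ⟩ := exists_top_eig hr W hWherm
  have hWn : (0:ℝ) < ‖W‖ := norm_pos_iff.mpr hW0
  have hθ0 : θ ≠ 0 := by
    intro h
    rw [h, abs_zero] at hθ
    linarith
  have htpos : (0:ℝ) < |θ| := lt_of_lt_of_le hWn hθ
  -- inverse of A - σ B
  have hCaT : IsUnit Ca.transpose.det := by rwa [Matrix.det_transpose]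
  have h1 : Ca.transpose * (Ca.transpose)⁻¹ = 1 := Matrix.mul_nonsing_inv _ hCaT
  have h2 : Ca * Ca⁻¹ = 1 := Matrix.mul_nonsing_inv _ hCa
  set N : Matrix (Fin n) (Fin n) ℝ := (Ca.transpose)⁻¹ * Da * Ca⁻¹ with hNdef
  have hMN : (A - σ • B) * N = 1 := by
    rw [hfac, hNdef]
    have e : (Ca * Da * Ca.transpose) * ((Ca.transpose)⁻¹ * Da * Ca⁻¹)
        = Ca * (Da * ((Ca.transpose * (Ca.transpose)⁻¹) * (Da * Ca⁻¹))) := by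
      simp only [Matrix.mul_assoc]
    rw [e, h1, one_mul, show Da * (Da * Ca⁻¹) = (Da * Da) * Ca⁻¹ from (Matrix.mul_assoc _ _ _).symm,
      hDD, one_mul, h2]
  -- W in terms of N
  have hWN : W = Cb.transpose * N * Cb := by
    rw [hWdef, hX, hNdef, Matrix.transpose_mul, Matrix.transpose_nonsing_inv]
    simp only [Matrix.mul_assoc]
  -- the generalized eigenvector
  set u : Fin n → ℝ := Cb *ᵥ v with hu
  set w : Fin n → ℝ := N *ᵥ u with hw
  have hMw : (A - σ • B) *ᵥ w = u := by
    rw [hw, Matrix.mulVec_mulVec, hMN, Matrix.one_mulVec]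
  have hCbTw : Cb.transpose *ᵥ w = θ • v := by
    rw [hw, hu, Matrix.mulVec_mulVec, Matrix.mulVec_mulVec, ← hWN, hvW]
  have hw0 : w ≠ 0 := by
    intro h
    rw [h, Matrix.mulVec_zero] at hCbTw
    exact hv0 (by simpa [smul_eq_zero, hθ0] using hCbTw.symm)
  have hBw' : B *ᵥ w = θ • u := by
    conv_lhs => rw [hCb]
    rw [← Matrix.mulVec_mulVec, hCbTw, Matrix.mulVec_smul, hu]
  have hBw : B *ᵥ w = θ • ((A - σ • B) *ᵥ w) := by rw [hBw', hMw]
  set lam : ℝ := σ + θ⁻¹ with hlam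
  have hAw : A *ᵥ w = lam • (B *ᵥ w) := by
    have h5 : A *ᵥ w - σ • (B *ᵥ w) = θ⁻¹ • (B *ᵥ w) := by
      conv_rhs => rw [hBw]
      rw [smul_smul θ⁻¹ θ, inv_mul_cancel₀ hθ0, one_smul, Matrix.sub_mulVec,
        Matrix.smul_mulVec]
    have := eq_add_of_sub_eq h5
    rw [hlam, add_smul, this]
    abel
  -- the element of the eigenvalue set
  have hAn : (0:ℝ) < ‖A‖ := norm_pos_iff.mpr hA0
  have hBn : (0:ℝ) < ‖B‖ := norm_pos_iff.mpr hB0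
  set S : Set ℝ := {d : ℝ | ∃ lam : ℝ, (∃ v : Fin n → ℝ, v ≠ 0 ∧ A.mulVec v = lam • B.mulVec v) ∧
      d = |σ * ‖B‖ / ‖A‖ - ‖B‖ * lam / ‖A‖|} with hS
  have hmem : |σ * ‖B‖ / ‖A‖ - ‖B‖ * lam / ‖A‖| ∈ S := ⟨lam, ⟨w, hw0, hAw⟩, rfl⟩
  have hbdd : BddBelow S := by
    refine ⟨0, fun x hx => ?_⟩
    obtain ⟨lam', -, rfl⟩ := hx
    exact abs_nonneg _
  have hd0 : |σ * ‖B‖ / ‖A‖ - ‖B‖ * lam / ‖A‖| = ‖B‖ / (‖A‖ * |θ|) := by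
    have e : σ * ‖B‖ / ‖A‖ - ‖B‖ * lam / ‖A‖ = -(‖B‖ * θ⁻¹ / ‖A‖) := by
      rw [hlam]; ring
    rw [e, abs_neg, abs_div, abs_mul, abs_inv, abs_of_nonneg (norm_nonneg B),
      abs_of_nonneg (norm_nonneg A), div_eq_div_iff hAn.ne' (by positivity)]
    field_simp [htpos.ne']
  have hsinf : sInf S ≤ ‖B‖ / (‖A‖ * |θ|) := hd0 ▸ csInf_le hbdd hmem
  -- final arithmetic
  have hc : (0:ℝ) ≤ (‖A - σ • B‖ / ‖B‖) * ‖X‖ ^ 2 := by positivity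
  calc (‖A - σ • B‖ / ‖B‖) * ‖X‖ ^ 2 * sInf S
      ≤ (‖A - σ • B‖ / ‖B‖) * ‖X‖ ^ 2 * (‖B‖ / (‖A‖ * |θ|)) :=
        mul_le_mul_of_nonneg_left hsinf hc
    _ ≤ (1 + |σ * ‖B‖ / ‖A‖|) * (‖X‖ ^ 2 / ‖W‖) := by
        have habs : |σ * ‖B‖ / ‖A‖| = |σ| * ‖B‖ / ‖A‖ := by
          rw [abs_div, abs_mul, abs_of_nonneg (norm_nonneg B), abs_of_nonneg (norm_nonneg A)]
        have htri : ‖A - σ • B‖ ≤ ‖A‖ + |σ| * ‖B‖ := by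
          calc ‖A - σ • B‖ ≤ ‖A‖ + ‖σ • B‖ := norm_sub_le _ _
            _ = ‖A‖ + |σ| * ‖B‖ := by rw [norm_smul, Real.norm_eq_abs]
        have e1 : (‖A - σ • B‖ / ‖B‖) * ‖X‖ ^ 2 * (‖B‖ / (‖A‖ * |θ|))
            = ‖A - σ • B‖ * ‖X‖ ^ 2 / (‖A‖ * |θ|) := by
          field_simp
        have e2 : (1 + |σ| * ‖B‖ / ‖A‖) * (‖X‖ ^ 2 / ‖W‖)
            = (‖A‖ + |σ| * ‖B‖) * ‖X‖ ^ 2 / (‖A‖ * ‖W‖) := by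
          field_simp
          try ring
        rw [habs, e1, e2]
        apply div_le_div₀ (by positivity)
        · exact mul_le_mul_of_nonneg_right htri (by positivity)
        · positivity
        · exact mul_le_mul_of_nonneg_left hθ (le_of_lt hAn)
end

section
/- With the assumptions of the norm-bound lemma and additionally σ ≠ 0, one has η² ‖X‖₂² ≤ (1 + 1/|σ₀|) μ / min_i |1 - λ_i/σ|, where the minimum is over all finite generalized eigenvalues λ_i of (A,B). -/
open Matrix
open scoped Matrix.Norms.L2Operator

lemma aux_spec {m : ℕ} (hm : 0 < m) (W : Matrix (Fin m) (Fin m) ℝ) (hW : W.IsHermitian) :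
    ∃ (θ : ℝ) (u : Fin m → ℝ), u ≠ 0 ∧ W.mulVec u = θ • u ∧ ‖W‖ ≤ |θ| := by
  haveI : Nonempty (Fin m) := ⟨⟨0, hm⟩⟩
  obtain ⟨i₀, hi₀⟩ := Finite.exists_max (fun i => |hW.eigenvalues i|)
  set b := hW.eigenvectorBasis with hb
  set μ := hW.eigenvalues with hμ
  refine ⟨μ i₀, ⇑(b i₀), ?_, hW.mulVec_eigenvectorBasis i₀, ?_⟩
  · intro h0
    have : (b i₀ : EuclideanSpace ℝ (Fin m)) = 0 := by
      ext j; exact congrFun h0 j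
    have h1 := b.orthonormal.1 i₀
    rw [this, norm_zero] at h1
    norm_num at h1
  · rw [l2_opNorm_def]
    apply ContinuousLinearMap.opNorm_le_bound _ (abs_nonneg _)
    intro x
    have hrepr : ∀ y : EuclideanSpace ℝ (Fin m), ∀ i,
        b.repr (Matrix.toEuclideanLin W y) i = μ i * b.repr y i := by
      intro y i
      rw [b.repr_apply_apply, b.repr_apply_apply]
      have hWt : Wᵀ = W := by rw [← Matrix.conjTranspose_eq_transpose_of_trivial]; exact hW
      have h1 : (Matrix.toEuclideanLin W y : EuclideanSpace ℝ (Fin m))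
          = (WithLp.equiv 2 _).symm (W *ᵥ (WithLp.equiv 2 _ y)) := rfl
      rw [h1]
      simp only [PiLp.inner_apply, RCLike.inner_apply, starRingEnd_apply, star_trivial]
      have : ∀ j, (WithLp.equiv 2 (Fin m → ℝ)).symm (W *ᵥ (WithLp.equiv 2 _ y)) j
          = (W *ᵥ ⇑y) j := fun j => rfl
      simp only [this]
      have hdot : (⇑(b i) ⬝ᵥ (W *ᵥ ⇑y)) = (W *ᵥ ⇑(b i)) ⬝ᵥ ⇑y := by
        rw [Matrix.dotProduct_mulVec, ← Matrix.mulVec_transpose, hWt]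
      have hdot' : (W *ᵥ ⇑(b i)) ⬝ᵥ ⇑y = μ i * (⇑(b i) ⬝ᵥ ⇑y) := by
        rw [hW.mulVec_eigenvectorBasis i, smul_dotProduct]
        rfl
      calc ∑ j, (W *ᵥ ⇑y) j * b i j = ⇑(b i) ⬝ᵥ (W *ᵥ ⇑y) := by rw [dotProduct_comm]; rfl
        _ = μ i * (⇑(b i) ⬝ᵥ ⇑y) := by rw [hdot, hdot']
        _ = μ i * ∑ j, y j * b i j := by rw [dotProduct_comm]; rfl
    set T := (Matrix.toEuclideanLin (𝕜 := ℝ) (m := Fin m) (n := Fin m)).trans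
        LinearMap.toContinuousLinearMap W with hT
    have hTx : T x = Matrix.toEuclideanLin W x := rfl
    have h2 : ‖T x‖ = Real.sqrt (∑ i, (μ i * b.repr x i) ^ 2) := by
      rw [← b.repr.norm_map (T x), EuclideanSpace.norm_eq]
      congr 1
      refine Finset.sum_congr rfl fun i _ => ?_
      rw [hTx, hrepr x i, Real.norm_eq_abs, sq_abs]
    have h3 : ‖x‖ = Real.sqrt (∑ i, (b.repr x i) ^ 2) := by
      rw [← b.repr.norm_map x, EuclideanSpace.norm_eq]
      congr 1
      refine Finset.sum_congr rfl fun i _ => ?_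
      rw [Real.norm_eq_abs, sq_abs]
    rw [h2, h3]
    rw [← Real.sqrt_sq (abs_nonneg (μ i₀)), ← Real.sqrt_mul (sq_abs (μ i₀) ▸ sq_nonneg (μ i₀))]
    apply Real.sqrt_le_sqrt
    rw [Finset.mul_sum]
    refine Finset.sum_le_sum fun i _ => ?_
    rw [mul_pow]
    refine mul_le_mul_of_nonneg_right ?_ (sq_nonneg _)
    calc (μ i) ^ 2 = |μ i| ^ 2 := (sq_abs _).symm
      _ ≤ |μ i₀| ^ 2 := pow_le_pow_left₀ (abs_nonneg _) (hi₀ i) 2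

set_option maxHeartbeats 1000000 in
/-- Norm bound lemma (second form): if in addition `σ ≠ 0`, then
`η² ‖X‖₂² · min_i |1 - λ_i/σ| ≤ (1 + 1/|σ₀|) μ`, the minimum being over all finite
generalized eigenvalues `λ_i` of `(A, B)` (stated in multiplied-through form). -/
theorem stmt6 {n r : ℕ} (A B : Matrix (Fin n) (Fin n) ℝ)
    (hA : A.IsSymm) (hB : B.IsSymm) (hA0 : A ≠ 0) (hB0 : B ≠ 0)
    (hBpsd : B.PosSemidef) (hrank : B.rank = r) (hr : 0 < r)
    (σ : ℝ) (hσ : σ ≠ 0) (hinv : IsUnit (A - σ • B).det)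
    (Ca Da : Matrix (Fin n) (Fin n) ℝ) (hCa : IsUnit Ca.det)
    (hDdiag : ∀ i j, i ≠ j → Da i j = 0) (hDsign : ∀ i, Da i i = 1 ∨ Da i i = -1)
    (hfac : A - σ • B = Ca * Da * Ca.transpose)
    (Cb : Matrix (Fin n) (Fin r) ℝ) (hCb : B = Cb * Cb.transpose)
    (hCbli : LinearIndependent ℝ (fun j => Cb.transpose j))
    (X : Matrix (Fin n) (Fin r) ℝ) (hX : X = Ca⁻¹ * Cb)
    (hW0 : X.transpose * Da * X ≠ 0) :
    (‖A - σ • B‖ / ‖B‖) * ‖X‖ ^ 2 *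
        sInf {d : ℝ | ∃ lam : ℝ, (∃ v : Fin n → ℝ, v ≠ 0 ∧ A.mulVec v = lam • B.mulVec v) ∧
          d = |1 - lam / σ|} ≤
      (1 + 1 / |σ * ‖B‖ / ‖A‖|) * (‖X‖ ^ 2 / ‖X.transpose * Da * X‖) := by
  set W := X.transpose * Da * X with hWdef
  have hBn : (0:ℝ) < ‖B‖ := norm_pos_iff.mpr hB0
  have hAn : (0:ℝ) < ‖A‖ := norm_pos_iff.mpr hA0
  have hWn : (0:ℝ) < ‖W‖ := norm_pos_iff.mpr hW0
  have hσa : (0:ℝ) < |σ| := abs_pos.mpr hσ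
  -- Da is symmetric and involutive
  have hDaT : Da.transpose = Da := by
    ext i j
    by_cases h : i = j
    · subst h; rfl
    · rw [Matrix.transpose_apply, hDdiag j i (fun hji => h hji.symm), hDdiag i j h]
  have hDa2 : Da * Da = 1 := by
    ext i j
    rw [Matrix.mul_apply, Finset.sum_eq_single i]
    · by_cases h : i = j
      · subst h; rcases hDsign i with h1 | h1 <;> simp [h1]
      · rw [hDdiag i j h, mul_zero, Matrix.one_apply_ne h]
    · intro k _ hk
      rw [hDdiag i k (fun h => hk h.symm), zero_mul]
    · intro h; exact absurd (Finset.mem_univ i) h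
  have hWherm : W.IsHermitian := by
    rw [Matrix.IsHermitian, Matrix.conjTranspose_eq_transpose_of_trivial, hWdef,
      Matrix.transpose_mul, Matrix.transpose_mul, Matrix.transpose_transpose, hDaT,
      Matrix.mul_assoc]
  obtain ⟨θ, u, hu0, huθ, hθn⟩ := aux_spec hr W hWherm
  have hθpos : (0:ℝ) < |θ| := lt_of_lt_of_le hWn hθn
  have hθ0 : θ ≠ 0 := fun h => by simp [h] at hθpos
  -- matrix identities
  have hTT : Ca.transpose * Ca⁻¹.transpose = 1 := by
    rw [← Matrix.transpose_mul, Matrix.nonsing_inv_mul _ hCa, Matrix.transpose_one]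
  set M := Ca⁻¹.transpose * Da * X with hM
  have hclaim1 : (A - σ • B) * M = Cb := by
    rw [hfac, hM]
    calc Ca * Da * Ca.transpose * (Ca⁻¹.transpose * Da * X)
        = Ca * (Da * ((Ca.transpose * Ca⁻¹.transpose) * (Da * X))) := by
          simp only [Matrix.mul_assoc]
      _ = Ca * ((Da * Da) * X) := by rw [hTT, Matrix.one_mul, Matrix.mul_assoc]
      _ = Ca * X := by rw [hDa2, Matrix.one_mul]
      _ = Cb := by rw [hX, ← Matrix.mul_assoc, Matrix.mul_nonsing_inv _ hCa, Matrix.one_mul]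
  have hclaim2 : B * M = Cb * W := by
    have hXt : Cb.transpose * Ca⁻¹.transpose = X.transpose := by
      rw [hX, Matrix.transpose_mul]
    rw [hCb, hM, hWdef]
    calc Cb * Cb.transpose * (Ca⁻¹.transpose * Da * X)
        = Cb * ((Cb.transpose * Ca⁻¹.transpose) * (Da * X)) := by
          simp only [Matrix.mul_assoc]
      _ = Cb * (X.transpose * Da * X) := by rw [hXt]; simp only [Matrix.mul_assoc]
  set v := M *ᵥ u with hv
  have hSv : (A - σ • B) *ᵥ v = Cb *ᵥ u := by
    rw [hv, Matrix.mulVec_mulVec, hclaim1]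
  have hBv : B *ᵥ v = θ • (Cb *ᵥ u) := by
    rw [hv, Matrix.mulVec_mulVec, hclaim2, ← Matrix.mulVec_mulVec, huθ, Matrix.mulVec_smul]
  have hCbu0 : Cb *ᵥ u ≠ 0 := by
    intro h
    apply hu0
    have hsum : ∑ j, u j • Cb.transpose j = Cb *ᵥ u := by
      funext i
      simp [Matrix.mulVec, dotProduct, Finset.sum_apply, mul_comm]
    have := Fintype.linearIndependent_iff.mp hCbli u (by rw [hsum, h])
    funext i; exact this i
  have hv0 : v ≠ 0 := by
    intro h
    apply hCbu0
    rw [← hSv, h, Matrix.mulVec_zero]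
  have hAv : A.mulVec v = (σ + θ⁻¹) • B.mulVec v := by
    have h1 : A *ᵥ v - σ • (B *ᵥ v) = Cb *ᵥ u := by
      rw [← hSv, Matrix.sub_mulVec, Matrix.smul_mulVec]
    have h2 : A *ᵥ v = Cb *ᵥ u + σ • B *ᵥ v := by rw [← h1]; abel
    rw [h2, hBv, smul_smul, smul_smul]
    have hcoef : (σ + θ⁻¹) * θ = 1 + σ * θ := by field_simp; ring
    rw [hcoef, add_smul, one_smul]
  -- membership in the set
  have hmem : (1/(|σ| * |θ|)) ∈ {d : ℝ | ∃ lam : ℝ,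
      (∃ v : Fin n → ℝ, v ≠ 0 ∧ A.mulVec v = lam • B.mulVec v) ∧ d = |1 - lam / σ|} := by
    refine ⟨σ + θ⁻¹, ⟨v, hv0, hAv⟩, ?_⟩
    have h3 : 1 - (σ + θ⁻¹)/σ = -(1/(σ*θ)) := by field_simp; ring
    rw [h3, abs_neg, abs_div, abs_one, abs_mul]
  have hbdd : BddBelow {d : ℝ | ∃ lam : ℝ,
      (∃ v : Fin n → ℝ, v ≠ 0 ∧ A.mulVec v = lam • B.mulVec v) ∧ d = |1 - lam / σ|} := by
    refine ⟨0, fun x hx => ?_⟩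
    obtain ⟨lam, -, hx⟩ := hx
    rw [hx]; exact abs_nonneg _
  have hInf : sInf {d : ℝ | ∃ lam : ℝ,
      (∃ v : Fin n → ℝ, v ≠ 0 ∧ A.mulVec v = lam • B.mulVec v) ∧ d = |1 - lam / σ|}
      ≤ 1/(|σ| * |θ|) := csInf_le hbdd hmem
  -- final arithmetic
  have hc : (0:ℝ) ≤ (‖A - σ • B‖ / ‖B‖) * ‖X‖ ^ 2 := by positivity
  refine le_trans (mul_le_mul_of_nonneg_left hInf hc) ?_
  have habs : |σ * ‖B‖ / ‖A‖| = |σ| * ‖B‖ / ‖A‖ := by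
    rw [abs_div, abs_mul, abs_norm, abs_norm]
  rw [habs]
  have hSle : ‖A - σ • B‖ ≤ ‖A‖ + |σ| * ‖B‖ := by
    calc ‖A - σ • B‖ ≤ ‖A‖ + ‖σ • B‖ := norm_sub_le _ _
      _ = ‖A‖ + |σ| * ‖B‖ := by rw [norm_smul, Real.norm_eq_abs]
  have e1 : (‖A - σ • B‖ / ‖B‖) * ‖X‖ ^ 2 * (1/(|σ| * |θ|))
      = (‖A - σ • B‖ * ‖X‖ ^ 2) / (‖B‖ * (|σ| * |θ|)) := by
    field_simp
  have e2 : (1 + 1 / (|σ| * ‖B‖ / ‖A‖)) * (‖X‖ ^ 2 / ‖W‖)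
      = ((|σ| * ‖B‖ + ‖A‖) * ‖X‖ ^ 2) / ((|σ| * ‖B‖) * ‖W‖) := by
    field_simp
  rw [e1, e2, div_le_div_iff₀ (by positivity) (by positivity)]
  have hx2 : (0:ℝ) ≤ ‖X‖ ^ 2 := sq_nonneg _
  nlinarith [mul_le_mul_of_nonneg_right hSle (by positivity : (0:ℝ) ≤ ‖X‖^2 * (|σ| * ‖B‖ * ‖W‖)),
    mul_le_mul_of_nonneg_left hθn (by positivity : (0:ℝ) ≤ (‖A‖ + |σ| * ‖B‖) * ‖X‖^2 * |σ| * ‖B‖)]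
end

section
/- Every eigenvalue of the symmetric matrix Xᵀ D_a X (where A - σB = C_a D_a C_aᵀ, B = C_b C_bᵀ, X = C_a⁻¹ C_b) is either 0 or equal to 1/(λ - σ) for some finite generalized eigenvalue λ of (A,B); consequently ‖Xᵀ D_a X‖₂ ≤ 1/ min_i |λ_i - σ|. -/
open Matrix
open scoped Matrix.Norms.L2Operator

lemma diag_l2_opNorm_le {r : ℕ} (d : Fin r → ℝ) {C : ℝ} (hC : 0 ≤ C) (h : ∀ i, |d i| ≤ C) :
    ‖(Matrix.diagonal d : Matrix (Fin r) (Fin r) ℝ)‖ ≤ C := by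
  rw [Matrix.l2_opNorm_def]
  refine ContinuousLinearMap.opNorm_le_bound _ hC fun x => ?_
  have happ : ∀ i, ((LinearMap.toContinuousLinearMap
      (Matrix.toEuclideanLin (Matrix.diagonal d))) x) i = d i * x i := by
    intro i
    simp [Matrix.toEuclideanLin_apply, Matrix.mulVec_diagonal]
  rw [EuclideanSpace.norm_eq]
  calc Real.sqrt (∑ i, ‖((LinearMap.toContinuousLinearMap
        (Matrix.toEuclideanLin (Matrix.diagonal d))) x) i‖ ^ 2)
      ≤ Real.sqrt (∑ i, C ^ 2 * ‖x i‖ ^ 2) := by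
        apply Real.sqrt_le_sqrt
        apply Finset.sum_le_sum
        intro i _
        rw [happ i, norm_mul]
        have h1 : ‖d i‖ ≤ C := by rw [Real.norm_eq_abs]; exact h i
        have h2 : (0:ℝ) ≤ ‖d i‖ := norm_nonneg _
        have h3 : (0:ℝ) ≤ ‖x i‖ := norm_nonneg _
        have h4 : ‖d i‖ ^ 2 ≤ C ^ 2 := by nlinarith
        rw [mul_pow]
        exact mul_le_mul_of_nonneg_right h4 (by positivity)
    _ = C * Real.sqrt (∑ i, ‖x i‖ ^ 2) := by
        rw [← Finset.mul_sum, Real.sqrt_mul (by positivity), Real.sqrt_sq hC]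
    _ = C * ‖x‖ := by rw [EuclideanSpace.norm_eq]

lemma herm_l2_opNorm_le {r : ℕ} (hr : Nonempty (Fin r)) (M : Matrix (Fin r) (Fin r) ℝ)
    (hMh : M.IsHermitian) {C : ℝ}
    (hC : 0 ≤ C) (h : ∀ i, |hMh.eigenvalues i| ≤ C) : ‖M‖ ≤ C := by
  obtain ⟨i0⟩ := hr
  haveI : Nontrivial (Matrix (Fin r) (Fin r) ℝ) :=
    ⟨0, 1, fun h => by
      have := congrFun (congrFun h i0) i0
      simp [Matrix.one_apply] at this⟩
  have hd : (RCLike.ofReal ∘ hMh.eigenvalues : Fin r → ℝ) = hMh.eigenvalues := by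
    funext i; simp
  calc ‖M‖ = ‖(hMh.eigenvectorUnitary : Matrix (Fin r) (Fin r) ℝ) *
        (Matrix.diagonal (RCLike.ofReal ∘ hMh.eigenvalues) *
          star (hMh.eigenvectorUnitary : Matrix (Fin r) (Fin r) ℝ))‖ := by
        conv_lhs => rw [hMh.spectral_theorem]
        rw [Unitary.conjStarAlgAut_apply, mul_assoc]
    _ = ‖Matrix.diagonal (RCLike.ofReal ∘ hMh.eigenvalues) *
          star (hMh.eigenvectorUnitary : Matrix (Fin r) (Fin r) ℝ)‖ :=
        CStarRing.norm_coe_unitary_mul _ _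
    _ = ‖Matrix.diagonal (RCLike.ofReal ∘ hMh.eigenvalues)‖ := by
        exact CStarRing.norm_mul_coe_unitary _ ⟨_, Unitary.star_mem hMh.eigenvectorUnitary.2⟩
    _ ≤ C := by rw [hd]; exact diag_l2_opNorm_le _ hC h

/-- Every eigenvalue of `Xᵀ D_a X` (with `A - σB = C_a D_a C_aᵀ`, `B = C_b C_bᵀ`,
`X = C_a⁻¹ C_b`) is `0` or of the form `1/(λ - σ)` for a finite generalized eigenvalue `λ`
of `(A, B)`; consequently `‖Xᵀ D_a X‖₂ · min_i |λ_i - σ| ≤ 1` (multiplied-through form of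
`‖Xᵀ D_a X‖₂ ≤ 1 / min_i |λ_i - σ|`). -/
theorem stmt7 {n r : ℕ} (A B : Matrix (Fin n) (Fin n) ℝ)
    (hA : A.IsSymm) (hB : B.IsSymm) (hBpsd : B.PosSemidef)
    (σ : ℝ) (hinv : IsUnit (A - σ • B).det)
    (Ca Da : Matrix (Fin n) (Fin n) ℝ) (hCa : IsUnit Ca.det)
    (hDdiag : ∀ i j, i ≠ j → Da i j = 0) (hDsign : ∀ i, Da i i = 1 ∨ Da i i = -1)
    (hfac : A - σ • B = Ca * Da * Ca.transpose)
    (Cb : Matrix (Fin n) (Fin r) ℝ) (hCb : B = Cb * Cb.transpose)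
    (hCbli : LinearIndependent ℝ (fun j => Cb.transpose j))
    (X : Matrix (Fin n) (Fin r) ℝ) (hX : X = Ca⁻¹ * Cb)
    (hne : {lam : ℝ | ∃ v : Fin n → ℝ, v ≠ 0 ∧ A.mulVec v = lam • B.mulVec v}.Nonempty) :
    (∀ θ : ℝ, (∃ u : Fin r → ℝ, u ≠ 0 ∧ (X.transpose * Da * X).mulVec u = θ • u) →
        θ = 0 ∨ ∃ lam : ℝ, (∃ v : Fin n → ℝ, v ≠ 0 ∧ A.mulVec v = lam • B.mulVec v) ∧
          θ = 1 / (lam - σ)) ∧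
      ‖X.transpose * Da * X‖ *
          sInf {d : ℝ | ∃ lam : ℝ,
            (∃ v : Fin n → ℝ, v ≠ 0 ∧ A.mulVec v = lam • B.mulVec v) ∧ d = |lam - σ|} ≤ 1 := by
  -- basic matrix facts
  have hDaDa : Da * Da = 1 := by
    ext i j
    rw [Matrix.mul_apply]
    rw [Finset.sum_eq_single i (fun k _ hk => by rw [hDdiag i k (Ne.symm hk), zero_mul])
      (by simp)]
    by_cases h : i = j
    · subst h
      rcases hDsign i with h1 | h1 <;> simp [h1]
    · rw [hDdiag i j h, mul_zero, Matrix.one_apply_ne h]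
  have hDaT : Da.transpose = Da := by
    ext i j
    by_cases h : i = j
    · subst h; simp
    · rw [Matrix.transpose_apply, hDdiag i j h, hDdiag j i (Ne.symm h)]
  have hCaX : Ca * X = Cb := by
    rw [hX, ← Matrix.mul_assoc, Matrix.mul_nonsing_inv Ca hCa, Matrix.one_mul]
  have hXT : Cb.transpose * (Ca⁻¹).transpose = X.transpose := by
    rw [hX, Matrix.transpose_mul]
  -- key matrix identities
  have key1 : (A - σ • B) * ((Ca⁻¹).transpose * Da * X) = Cb := by
    rw [hfac]
    have : Ca.transpose * ((Ca⁻¹).transpose * Da * X) = Da * X := by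
      rw [← Matrix.mul_assoc, ← Matrix.mul_assoc, ← Matrix.transpose_mul,
        Matrix.nonsing_inv_mul Ca hCa, Matrix.transpose_one, Matrix.one_mul]
    calc Ca * Da * Ca.transpose * ((Ca⁻¹).transpose * Da * X)
        = Ca * Da * (Ca.transpose * ((Ca⁻¹).transpose * Da * X)) := by
          rw [Matrix.mul_assoc]
      _ = Ca * Da * (Da * X) := by rw [this]
      _ = Ca * (Da * Da) * X := by rw [Matrix.mul_assoc, ← Matrix.mul_assoc Da Da X,
          ← Matrix.mul_assoc]
      _ = Cb := by rw [hDaDa, Matrix.mul_one, hCaX]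
  have key2 : B * ((Ca⁻¹).transpose * Da * X) = Cb * (X.transpose * Da * X) := by
    rw [hCb]
    calc Cb * Cb.transpose * ((Ca⁻¹).transpose * Da * X)
        = Cb * ((Cb.transpose * (Ca⁻¹).transpose) * (Da * X)) := by
          rw [Matrix.mul_assoc, Matrix.mul_assoc, Matrix.mul_assoc]
      _ = Cb * (X.transpose * Da * X) := by rw [hXT, Matrix.mul_assoc]
  -- injectivity of Cb
  have hCbinj : ∀ u : Fin r → ℝ, Cb.mulVec u = 0 → u = 0 := by
    intro u hu
    have h0 : ∑ j, u j • Cb.transpose j = 0 := by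
      funext i
      have := congrFun hu i
      simpa [Matrix.mulVec, dotProduct, Finset.sum_apply, mul_comm] using this
    have := Fintype.linearIndependent_iff.mp hCbli u h0
    funext j; exact this j
  -- Part 1
  have part1 : ∀ θ : ℝ, (∃ u : Fin r → ℝ, u ≠ 0 ∧ (X.transpose * Da * X).mulVec u = θ • u) →
      θ = 0 ∨ ∃ lam : ℝ, (∃ v : Fin n → ℝ, v ≠ 0 ∧ A.mulVec v = lam • B.mulVec v) ∧
        θ = 1 / (lam - σ) := by
    rintro θ ⟨u, hu, huv⟩
    by_cases hθ : θ = 0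
    · exact Or.inl hθ
    right
    refine ⟨σ + θ⁻¹, ?_, ?_⟩
    · set v : Fin n → ℝ := ((Ca⁻¹).transpose * Da * X).mulVec u with hv
      have hAv : (A - σ • B).mulVec v = Cb.mulVec u := by
        rw [hv, Matrix.mulVec_mulVec, key1]
      have hBv : B.mulVec v = θ • Cb.mulVec u := by
        rw [hv, Matrix.mulVec_mulVec, key2, ← Matrix.mulVec_mulVec, huv,
          Matrix.mulVec_smul]
      have hvne : v ≠ 0 := by
        intro h0
        apply hu
        apply hCbinj
        rw [← hAv, h0, Matrix.mulVec_zero]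
      refine ⟨v, hvne, ?_⟩
      have hAv' : A.mulVec v - σ • B.mulVec v = Cb.mulVec u := by
        rw [← hAv, Matrix.sub_mulVec, Matrix.smul_mulVec]
      have : A.mulVec v = σ • B.mulVec v + θ⁻¹ • (θ • Cb.mulVec u) := by
        rw [smul_smul, inv_mul_cancel₀ hθ, one_smul, ← hAv']
        abel
      rw [this, ← hBv, add_smul]
    · rw [add_sub_cancel_left, one_div, inv_inv]
  refine ⟨part1, ?_⟩
  -- Part 2
  set M := X.transpose * Da * X with hM
  set S := {d : ℝ | ∃ lam : ℝ,
      (∃ v : Fin n → ℝ, v ≠ 0 ∧ A.mulVec v = lam • B.mulVec v) ∧ d = |lam - σ|} with hS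
  have hSne : S.Nonempty := by
    obtain ⟨lam, hlam⟩ := hne
    exact ⟨|lam - σ|, lam, hlam, rfl⟩
  have hSbdd : BddBelow S := ⟨0, fun d ⟨lam, _, hd⟩ => hd ▸ abs_nonneg _⟩
  have hSpos : 0 ≤ sInf S := le_csInf hSne (fun d ⟨lam, _, hd⟩ => hd ▸ abs_nonneg _)
  by_cases hMz : ‖M‖ = 0
  · rw [hMz, zero_mul]; norm_num
  -- M is hermitian
  have hMT : M.transpose = M := by
    rw [hM, Matrix.transpose_mul, Matrix.transpose_mul, Matrix.transpose_transpose,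
      hDaT, Matrix.mul_assoc]
  have hMh : M.IsHermitian := by
    show Mᴴ = M
    have : Mᴴ = M.transpose := by
      ext i j
      simp [Matrix.conjTranspose_apply]
    rw [this, hMT]
  -- r is nonzero
  have hrne : Nonempty (Fin r) := by
    rcases Nat.eq_zero_or_pos r with hr0 | hrpos
    · exfalso
      apply hMz
      have : M = 0 := by
        ext i j
        exact absurd i.isLt (by omega)
      rw [this, norm_zero]
    · exact ⟨⟨0, hrpos⟩⟩
  -- the maximal absolute eigenvalue
  haveI := hrne
  set μ := hMh.eigenvalues with hμ
  set C := Finset.univ.sup' (Finset.univ_nonempty) (fun i => |μ i|) with hC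
  have hCub : ∀ i, |μ i| ≤ C := fun i => by
    rw [hC]
    exact Finset.le_sup' (fun i => |μ i|) (Finset.mem_univ i)
  have hC0 : 0 ≤ C := le_trans (abs_nonneg _) (hCub (Classical.arbitrary _))
  have hMC : ‖M‖ ≤ C := herm_l2_opNorm_le hrne M hMh hC0 hCub
  obtain ⟨i, _, hiC⟩ := Finset.exists_mem_eq_sup' (Finset.univ_nonempty) (fun i => |μ i|)
  have hCpos : 0 < C := lt_of_le_of_ne hC0 (fun h => hMz (le_antisymm (h ▸ hMC) (norm_nonneg _)))
  have hμine : μ i ≠ 0 := by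
    intro h
    rw [hC, hiC, h, abs_zero] at hCpos
    exact lt_irrefl _ hCpos
  -- μ i is an eigenvalue of M with eigenvector the basis vector
  have heig : ∃ u : Fin r → ℝ, u ≠ 0 ∧ M.mulVec u = μ i • u := by
    refine ⟨⇑(hMh.eigenvectorBasis i), ?_, hMh.mulVec_eigenvectorBasis i⟩
    intro h0
    have hb0 : (hMh.eigenvectorBasis i : EuclideanSpace ℝ (Fin r)) = 0 := by
      ext j
      exact congrFun h0 j
    have := hMh.eigenvectorBasis.orthonormal.1 i
    rw [hb0, norm_zero] at this
    exact zero_ne_one this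
  rcases part1 (μ i) heig with h0 | ⟨lam, hlam, hval⟩
  · exact absurd h0 hμine
  have hlamne : lam - σ ≠ 0 := by
    intro h
    rw [hval, h, div_zero] at hμine
    exact hμine rfl
  have hmem : |lam - σ| ∈ S := ⟨lam, hlam, rfl⟩
  have hle : sInf S ≤ |lam - σ| := csInf_le hSbdd hmem
  calc ‖M‖ * sInf S ≤ |μ i| * |lam - σ| := by
        apply mul_le_mul (le_trans hMC (le_of_eq (hC.trans (id hiC)))) hle hSpos (abs_nonneg _)
    _ = 1 := by
        rw [← abs_mul, hval, one_div, inv_mul_cancel₀ hlamne, abs_one]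
end

section
/- Suppose β A v - α B v = r for real α, β not both zero, v ≠ 0, and suppose ‖r‖₂ ≤ (|β|‖A‖₂ + |α|‖B‖₂)‖v‖₂ ε for some ε > 0. Then there exist matrices E and F with ‖E‖₂ ≤ ε‖A‖₂, ‖F‖₂ ≤ ε‖B‖₂, and β(A+E)v = α(B+F)v. Explicitly, E = -sign(β)‖A‖₂ r vᵀ / ((|β|‖A‖₂ + |α|‖B‖₂)‖v‖₂²) and F = sign(α)‖B‖₂ r vᵀ / ((|β|‖A‖₂ + |α|‖B‖₂)‖v‖₂²) work. -/
open Matrix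
open scoped Matrix.Norms.L2Operator

lemma aux_self_mul_sign (x : ℝ) : x * Real.sign x = |x| := by
  rcases lt_trichotomy x 0 with h|h|h
  · rw [Real.sign_of_neg h, abs_of_neg h]; ring
  · simp [h]
  · rw [Real.sign_of_pos h, abs_of_pos h]; ring

lemma aux_vecMulVec_mulVec {n : ℕ} (r v y : Fin n → ℝ) :
    (vecMulVec r v).mulVec y = (v ⬝ᵥ y) • r := by
  funext i
  simp [vecMulVec, mulVec, dotProduct, Finset.sum_mul, Finset.mul_sum]
  congr 1; funext j; ring

lemma aux_dot_le {n : ℕ} (v y : Fin n → ℝ) :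
    |v ⬝ᵥ y| ≤ ‖(WithLp.equiv 2 (Fin n → ℝ)).symm v‖ * ‖(WithLp.equiv 2 (Fin n → ℝ)).symm y‖ := by
  have h : v ⬝ᵥ y = inner ℝ ((WithLp.equiv 2 (Fin n → ℝ)).symm v)
      ((WithLp.equiv 2 (Fin n → ℝ)).symm y) := by
    rw [PiLp.inner_apply]; simp [dotProduct, mul_comm]
  rw [h]
  exact abs_real_inner_le_norm _ _

lemma aux_norm_vecMulVec_le {n : ℕ} (r v : Fin n → ℝ) :
    ‖vecMulVec r v‖ ≤
      ‖(WithLp.equiv 2 (Fin n → ℝ)).symm r‖ * ‖(WithLp.equiv 2 (Fin n → ℝ)).symm v‖ := by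
  rw [Matrix.l2_opNorm_def]
  apply ContinuousLinearMap.opNorm_le_bound _
    (mul_nonneg (norm_nonneg _) (norm_nonneg _))
  intro x
  have : (LinearEquiv.trans (Matrix.toEuclideanLin) (LinearMap.toContinuousLinearMap)
      (vecMulVec r v)) x = (WithLp.equiv 2 (Fin n → ℝ)).symm
        ((vecMulVec r v).mulVec ((WithLp.equiv 2 (Fin n → ℝ)) x)) := rfl
  rw [this, aux_vecMulVec_mulVec]
  have hx : (WithLp.equiv 2 (Fin n → ℝ)).symm
      ((v ⬝ᵥ (WithLp.equiv 2 (Fin n → ℝ)) x) • r)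
      = (v ⬝ᵥ (WithLp.equiv 2 (Fin n → ℝ)) x) • (WithLp.equiv 2 (Fin n → ℝ)).symm r := rfl
  rw [hx, norm_smul]
  have := aux_dot_le v ((WithLp.equiv 2 (Fin n → ℝ)) x)
  simp only [Equiv.symm_apply_apply] at this
  calc |v ⬝ᵥ (WithLp.equiv 2 (Fin n → ℝ)) x| * ‖(WithLp.equiv 2 (Fin n → ℝ)).symm r‖
      ≤ (‖(WithLp.equiv 2 (Fin n → ℝ)).symm v‖ * ‖x‖) * ‖(WithLp.equiv 2 (Fin n → ℝ)).symm r‖ := by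
        apply mul_le_mul_of_nonneg_right _ (norm_nonneg _)
        exact this
    _ = ‖(WithLp.equiv 2 (Fin n → ℝ)).symm r‖ * ‖(WithLp.equiv 2 (Fin n → ℝ)).symm v‖ * ‖x‖ := by ring

lemma aux_dot_self {n : ℕ} (v : Fin n → ℝ) :
    v ⬝ᵥ v = ‖(WithLp.equiv 2 (Fin n → ℝ)).symm v‖ ^ 2 := by
  have h : v ⬝ᵥ v = inner ℝ ((WithLp.equiv 2 (Fin n → ℝ)).symm v)
      ((WithLp.equiv 2 (Fin n → ℝ)).symm v) := by
    rw [PiLp.inner_apply]; simp [dotProduct, mul_comm, sq]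
  rw [h, real_inner_self_eq_norm_sq]

/-- Residual-to-backward-error lemma: if `(β A - α B) v = r` with
`‖r‖₂ ≤ (|β|‖A‖₂ + |α|‖B‖₂)‖v‖₂ ε`, then the explicit rank-one perturbations
`E = -sign(β)‖A‖₂ r vᵀ / ((|β|‖A‖₂+|α|‖B‖₂)‖v‖₂²)` and
`F = sign(α)‖B‖₂ r vᵀ / ((|β|‖A‖₂+|α|‖B‖₂)‖v‖₂²)` satisfy `‖E‖₂ ≤ ε‖A‖₂`,
`‖F‖₂ ≤ ε‖B‖₂`, and `β(A+E)v = α(B+F)v`. -/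
theorem stmt11 {n : ℕ} (A B : Matrix (Fin n) (Fin n) ℝ) (hA : A ≠ 0) (hB : B ≠ 0)
    (v : Fin n → ℝ) (hv : v ≠ 0) (α β : ℝ) (hαβ : ¬(α = 0 ∧ β = 0))
    (rvec : Fin n → ℝ) (hr : β • A.mulVec v - α • B.mulVec v = rvec)
    (ε : ℝ) (hε : 0 < ε)
    (hres : ‖(WithLp.equiv 2 (Fin n → ℝ)).symm rvec‖ ≤
      (|β| * ‖A‖ + |α| * ‖B‖) * ‖(WithLp.equiv 2 (Fin n → ℝ)).symm v‖ * ε) :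
    ∃ E F : Matrix (Fin n) (Fin n) ℝ,
      E = (-(Real.sign β) * ‖A‖ /
            ((|β| * ‖A‖ + |α| * ‖B‖) * ‖(WithLp.equiv 2 (Fin n → ℝ)).symm v‖ ^ 2)) •
          vecMulVec rvec v ∧
      F = ((Real.sign α) * ‖B‖ /
            ((|β| * ‖A‖ + |α| * ‖B‖) * ‖(WithLp.equiv 2 (Fin n → ℝ)).symm v‖ ^ 2)) •
          vecMulVec rvec v ∧
      ‖E‖ ≤ ε * ‖A‖ ∧ ‖F‖ ≤ ε * ‖B‖ ∧
      β • (A + E).mulVec v = α • (B + F).mulVec v := by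
  set nv : ℝ := ‖(WithLp.equiv 2 (Fin n → ℝ)).symm v‖ with hnv
  set S : ℝ := |β| * ‖A‖ + |α| * ‖B‖ with hS
  have hAn : 0 < ‖A‖ := norm_pos_iff.mpr hA
  have hBn : 0 < ‖B‖ := norm_pos_iff.mpr hB
  have hvn : 0 < nv := by
    rw [hnv]; rw [norm_pos_iff]
    simpa using hv
  have hSpos : 0 < S := by
    rcases not_and_or.mp hαβ with h | h
    · have : 0 < |α| * ‖B‖ := mul_pos (abs_pos.mpr h) hBn
      have h2 : 0 ≤ |β| * ‖A‖ := mul_nonneg (abs_nonneg _) hAn.le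
      linarith
    · have : 0 < |β| * ‖A‖ := mul_pos (abs_pos.mpr h) hAn
      have h2 : 0 ≤ |α| * ‖B‖ := mul_nonneg (abs_nonneg _) hBn.le
      linarith
  have hD : 0 < S * nv ^ 2 := mul_pos hSpos (pow_pos hvn 2)
  set cE : ℝ := -(Real.sign β) * ‖A‖ / (S * nv ^ 2) with hcE
  set cF : ℝ := (Real.sign α) * ‖B‖ / (S * nv ^ 2) with hcF
  have hM : (vecMulVec rvec v).mulVec v = (nv ^ 2 : ℝ) • rvec := by
    rw [aux_vecMulVec_mulVec, aux_dot_self]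
  have hMle : ‖vecMulVec rvec v‖ ≤ S * nv * ε * nv := by
    calc ‖vecMulVec rvec v‖ ≤ ‖(WithLp.equiv 2 (Fin n → ℝ)).symm rvec‖ * nv :=
          aux_norm_vecMulVec_le rvec v
      _ ≤ S * nv * ε * nv := mul_le_mul_of_nonneg_right hres hvn.le
  have hc' : β * cE * nv ^ 2 - α * cF * nv ^ 2 = -1 := by
    have h1 := aux_self_mul_sign β
    have h2 := aux_self_mul_sign α
    rw [hcE, hcF]
    field_simp
    rw [hS]
    linear_combination (-1 : ℝ) * (‖A‖ * h1 + ‖B‖ * h2)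
  have hnormbound : ∀ c C : ℝ, 0 < C → |c| ≤ C / (S * nv ^ 2) →
      ‖c • vecMulVec rvec v‖ ≤ ε * C := by
    intro c C hC hcle
    rw [norm_smul, Real.norm_eq_abs]
    calc |c| * ‖vecMulVec rvec v‖ ≤ (C / (S * nv ^ 2)) * (S * nv * ε * nv) :=
          mul_le_mul hcle hMle (norm_nonneg _) (div_nonneg hC.le hD.le)
      _ = ε * C := by field_simp
  refine ⟨cE • vecMulVec rvec v, cF • vecMulVec rvec v, rfl, rfl, ?_, ?_, ?_⟩
  · refine hnormbound cE ‖A‖ hAn ?_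
    rw [hcE, abs_div, abs_of_pos hD]
    gcongr
    rw [abs_mul, abs_neg, abs_of_nonneg hAn.le]
    have hsb : |Real.sign β| ≤ 1 := by
      rcases lt_trichotomy β 0 with h|h|h <;>
        simp [Real.sign_of_neg, Real.sign_of_pos, h]
    nlinarith
  · refine hnormbound cF ‖B‖ hBn ?_
    rw [hcF, abs_div, abs_of_pos hD]
    gcongr
    rw [abs_mul, abs_of_nonneg hBn.le]
    have hsb : |Real.sign α| ≤ 1 := by
      rcases lt_trichotomy α 0 with h|h|h <;>
        simp [Real.sign_of_neg, Real.sign_of_pos, h]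
    nlinarith
  · funext i
    have hri := congrFun hr i
    simp only [Pi.sub_apply, Pi.smul_apply, smul_eq_mul] at hri
    simp only [Matrix.add_mulVec, Matrix.smul_mulVec, hM, Pi.add_apply,
      Pi.smul_apply, smul_eq_mul]
    linear_combination hri + rvec i * hc'
end
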